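/- arXiv:2407.15997 — 2 statements merged into one kernel-verified Lean document; each statement's English description precedes it below -/
import Mathlib

section
/- Let Ω ⊆ ℂ^d be open and let 𝒳 be a Hausdorff topological vector space of holomorphic functions on Ω satisfying (P1)–(P3). A polynomial P ∈ 𝒫_d is cyclic in 𝒳 if and only if every irreducible factor of P is cyclic in 𝒳. -/
/-!
`S[F]` is closed and invariant under multiplication by polynomials, so `G ∈ S[F]`
forces `S[G] ⊆ S[F]`, and since `S[1]` is dense by (P1), `F` is cyclic iff `1 ∈ S[F]`.
Hence divisors of cyclic polynomials are cyclic. Conversely, if `A` and `B` are cyclic,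
multiplying `1 ∈ S[B]` by `A` (a continuous map) gives `A ∈ S[AB]`, so `1 ∈ S[A] ⊆ S[AB]`;
induction over the factorization of `P` finishes the proof.
-/

/-!
A Hausdorff topological vector space `X` of holomorphic functions on an open set
`Ω ⊆ ℂ^d` satisfying (P1) (polynomials are dense), (P2) (point evaluations at points
of `Ω` are continuous) and (P3) (the shift operators, and hence multiplication by any
polynomial, are continuous linear self maps).
-/
structure HoloFunSpace (d : ℕ) (Ω : Set (Fin d → ℂ)) (X : Type*)
    [AddCommGroup X] [Module ℂ X] [TopologicalSpace X] where
  /-- The realization of elements of `X` as (holomorphic) functions on `Ω`. -/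
  toFun : X →ₗ[ℂ] ((Fin d → ℂ) → ℂ)
  holo : ∀ F : X, DifferentiableOn ℂ (toFun F) Ω
  inj : ∀ F G : X, Set.EqOn (toFun F) (toFun G) Ω → F = G
  /-- The polynomials, as elements of `X`. -/
  poly : MvPolynomial (Fin d) ℂ →ₗ[ℂ] X
  poly_eval : ∀ (P : MvPolynomial (Fin d) ℂ), ∀ z ∈ Ω,
    toFun (poly P) z = MvPolynomial.eval z P
  /-- (P1): polynomials are dense in `X`. -/
  dense_poly : Dense (Set.range fun P : MvPolynomial (Fin d) ℂ => poly P)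
  /-- (P2): point evaluations at points of `Ω` are continuous. -/
  eval_cont : ∀ z ∈ Ω, Continuous fun F : X => toFun F z
  /-- Multiplication by a polynomial, a continuous linear self map of `X`;
  (P3) is the special case of the shifts `mul (X j)`. -/
  mul : MvPolynomial (Fin d) ℂ → X →L[ℂ] X
  mul_eval : ∀ (P : MvPolynomial (Fin d) ℂ) (F : X), ∀ z ∈ Ω,
    toFun (mul P F) z = MvPolynomial.eval z P * toFun F z

namespace HoloFunSpace

variable {d : ℕ} {Ω : Set (Fin d → ℂ)} {X : Type*}
  [AddCommGroup X] [Module ℂ X] [TopologicalSpace X]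

/-- The maximal domain `Ω_max`: all `w ∈ ℂ^d` such that evaluation at `w`, defined on
polynomials, extends to a continuous linear functional on `X`. -/
def maxDomain (H : HoloFunSpace d Ω X) : Set (Fin d → ℂ) :=
  {w | ∃ Λ : X →L[ℂ] ℂ, ∀ P : MvPolynomial (Fin d) ℂ, Λ (H.poly P) = MvPolynomial.eval w P}

/-- The invariant subspace `S[F]`: the closure of `{P · F : P ∈ 𝒫_d}`. -/
def invSub (H : HoloFunSpace d Ω X) (F : X) : Set X :=
  closure (Set.range fun P : MvPolynomial (Fin d) ℂ => H.mul P F)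

/-- `F` is cyclic if `S[F] = X`. -/
def Cyclic (H : HoloFunSpace d Ω X) (F : X) : Prop := H.invSub F = Set.univ

/-- The joint invariant subspace `S[𝓕]`: the closed linear span of `⋃_{F ∈ 𝓕} S[F]`. -/
def jointInvSub (H : HoloFunSpace d Ω X) (𝓕 : Set X) : Set X :=
  closure (Submodule.span ℂ (⋃ F ∈ 𝓕, H.invSub F) : Set X)

/-- A family `𝓕` is jointly cyclic if `S[𝓕] = X`. -/
def JointlyCyclic (H : HoloFunSpace d Ω X) (𝓕 : Set X) : Prop :=
  H.jointInvSub 𝓕 = Set.univ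

end HoloFunSpace

namespace HoloFunSpace

variable {d : ℕ} {Ω : Set (Fin d → ℂ)} {X : Type*}
  [AddCommGroup X] [Module ℂ X] [TopologicalSpace X] (H : HoloFunSpace d Ω X)

lemma mul_mul_apply (R S : MvPolynomial (Fin d) ℂ) (F : X) :
    H.mul R (H.mul S F) = H.mul (R * S) F :=
  H.inj _ _ fun z hz => by simp only [H.mul_eval _ _ z hz, map_mul, mul_assoc]

lemma mul_poly (A B : MvPolynomial (Fin d) ℂ) : H.mul A (H.poly B) = H.poly (A * B) :=
  H.inj _ _ fun z hz => by rw [H.mul_eval _ _ z hz, H.poly_eval _ z hz, H.poly_eval _ z hz, map_mul]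

lemma mul_mem_invSub (R : MvPolynomial (Fin d) ℂ) (F : X) : H.mul R F ∈ H.invSub F :=
  subset_closure ⟨R, rfl⟩

lemma mapsTo_mul_invSub_self (R : MvPolynomial (Fin d) ℂ) (F : X) :
    Set.MapsTo (H.mul R) (H.invSub F) (H.invSub F) :=
  Set.MapsTo.closure (by rintro _ ⟨S, rfl⟩; exact ⟨R * S, (H.mul_mul_apply R S F).symm⟩)
    (H.mul R).continuous

lemma mapsTo_mul_invSub (R : MvPolynomial (Fin d) ℂ) (F : X) :
    Set.MapsTo (H.mul R) (H.invSub F) (H.invSub (H.mul R F)) :=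
  Set.MapsTo.closure
    (by rintro _ ⟨S, rfl⟩; exact ⟨S, by simp only [H.mul_mul_apply, mul_comm]⟩)
    (H.mul R).continuous

lemma invSub_subset_of_mem {F G : X} (h : F ∈ H.invSub G) : H.invSub F ⊆ H.invSub G :=
  closure_minimal (by rintro _ ⟨S, rfl⟩; exact H.mapsTo_mul_invSub_self S G h) isClosed_closure

variable {H}

lemma Cyclic.of_mem_invSub {F G : X} (hF : H.Cyclic F) (h : F ∈ H.invSub G) : H.Cyclic G :=
  Set.eq_univ_of_univ_subset (hF ▸ H.invSub_subset_of_mem h)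

variable (H)

lemma cyclic_poly_one : H.Cyclic (H.poly 1) := by
  have hrange : (Set.range fun P => H.mul P (H.poly 1)) = Set.range H.poly := by
    simp only [mul_poly, mul_one]
  rw [Cyclic, invSub, hrange]
  exact H.dense_poly.closure_eq

lemma cyclic_iff_poly_one_mem_invSub (F : X) : H.Cyclic F ↔ H.poly 1 ∈ H.invSub F :=
  ⟨fun hF => hF ▸ Set.mem_univ _, H.cyclic_poly_one.of_mem_invSub⟩

variable {H}

lemma Cyclic.of_dvd {P Q : MvPolynomial (Fin d) ℂ} (hP : H.Cyclic (H.poly P)) (hQP : Q ∣ P) :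
    H.Cyclic (H.poly Q) := by
  obtain ⟨R, rfl⟩ := hQP
  refine hP.of_mem_invSub ?_
  rw [mul_comm, ← H.mul_poly]
  exact H.mul_mem_invSub R _

lemma Cyclic.mul {A B : MvPolynomial (Fin d) ℂ} (hA : H.Cyclic (H.poly A))
    (hB : H.Cyclic (H.poly B)) : H.Cyclic (H.poly (A * B)) := by
  rw [cyclic_iff_poly_one_mem_invSub] at hA hB ⊢
  have hA_mem : H.poly A ∈ H.invSub (H.poly (A * B)) := by
    simpa only [mul_poly, mul_one] using H.mapsTo_mul_invSub A (H.poly B) hB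
  exact H.invSub_subset_of_mem hA_mem hA

lemma cyclic_poly_of_isUnit {u : MvPolynomial (Fin d) ℂ} (hu : IsUnit u) :
    H.Cyclic (H.poly u) :=
  H.cyclic_poly_one.of_dvd hu.dvd

lemma cyclic_poly_of_forall_irreducible_dvd {P : MvPolynomial (Fin d) ℂ} (hP : P ≠ 0)
    (hfac : ∀ Q, Irreducible Q → Q ∣ P → H.Cyclic (H.poly Q)) : H.Cyclic (H.poly P) := by
  induction P using UniqueFactorizationMonoid.induction_on_prime with
  | h₁ => exact absurd rfl hP
  | h₂ u hu => exact cyclic_poly_of_isUnit hu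
  | h₃ a p ha hp ih =>
    exact (hfac p hp.irreducible (dvd_mul_right p a)).mul
      (ih ha fun Q hQ hQa => hfac Q hQ (hQa.mul_left p))

end HoloFunSpace

open HoloFunSpace in
theorem cyclic_iff_irreducible_factors_cyclic_general
    {d : ℕ} {Ω : Set (Fin d → ℂ)} {X : Type*}
    [AddCommGroup X] [Module ℂ X] [TopologicalSpace X]
    (H : HoloFunSpace d Ω X)
    (P : MvPolynomial (Fin d) ℂ) (hP : P ≠ 0) :
    H.Cyclic (H.poly P) ↔
      ∀ Q : MvPolynomial (Fin d) ℂ, Irreducible Q → Q ∣ P → H.Cyclic (H.poly Q) :=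
  ⟨fun hc _ _ hQP => hc.of_dvd hQP, cyclic_poly_of_forall_irreducible_dvd hP⟩

open HoloFunSpace in
/-- A (nonzero) polynomial `P` is cyclic if and only if every
irreducible factor of `P` is cyclic. -/
theorem cyclic_iff_irreducible_factors_cyclic
    {d : ℕ} {Ω : Set (Fin d → ℂ)} {X : Type*}
    [AddCommGroup X] [Module ℂ X] [TopologicalSpace X]
    [IsTopologicalAddGroup X] [ContinuousSMul ℂ X] [T2Space X]
    (hΩ : IsOpen Ω) (H : HoloFunSpace d Ω X)
    (P : MvPolynomial (Fin d) ℂ) (hP : P ≠ 0) :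
    H.Cyclic (H.poly P) ↔
      ∀ Q : MvPolynomial (Fin d) ℂ, Irreducible Q → Q ∣ P → H.Cyclic (H.poly Q) :=
  cyclic_iff_irreducible_factors_cyclic_general H P hP
end

section
/- Let Ω ⊆ ℂ^d be open and let 𝒳 be a Hausdorff topological vector space of holomorphic functions on Ω satisfying (P1)–(P3). For every w ∈ ℂ^d, one has 𝒳 = ℂ1 + S[ℱ_w], where ℱ_w = {z_j − w_j : 1 ≤ j ≤ d}; that is, every element of 𝒳 is the sum of a constant function and an element of the joint invariant subspace S[ℱ_w]. -/
/-!
Every polynomial `P` satisfies `P - P(w) ∈ (z_1 - w_1, …, z_d - w_d)`, so `P - P(w)·1` is a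
polynomial combination of the `z_j - w_j` and lies in `S[ℱ_w]`. Thus `ℂ·1 + S[ℱ_w]` contains
the polynomials; being the sum of a closed subspace and a line it is closed, and since the
polynomials are dense it is all of `X`.
-/

theorem MvPolynomial.sub_C_eval_mem_span_X_sub_C {R σ : Type*} [CommRing R] (w : σ → R)
    (P : MvPolynomial σ R) :
    P - C (eval w P) ∈ Ideal.span (Set.range fun i => X i - C (w i)) := by
  induction P using MvPolynomial.induction_on with
  | C a => simp
  | add p q hp hq =>
    rw [map_add, map_add, add_sub_add_comm]
    exact add_mem hp hq
  | mul_X p i hp =>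
    have h : p * X i - C (eval w (p * X i)) =
        p * (X i - C (w i)) + (p - C (eval w p)) * C (w i) := by
      rw [map_mul, eval_X, map_mul]
      ring
    rw [h]
    exact add_mem (Ideal.mul_mem_left _ p (Ideal.subset_span ⟨i, rfl⟩))
      (Ideal.mul_mem_right _ _ hp)

namespace HoloFunSpace

open MvPolynomial Submodule

variable {d : ℕ} {Ω : Set (Fin d → ℂ)} {X : Type*}
  [AddCommGroup X] [Module ℂ X] [TopologicalSpace X] (H : HoloFunSpace d Ω X)

theorem poly_mul (P Q : MvPolynomial (Fin d) ℂ) : H.poly (P * Q) = H.mul P (H.poly Q) :=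
  H.inj _ _ fun z hz => by
    rw [H.poly_eval _ z hz, H.mul_eval _ _ z hz, H.poly_eval _ z hz, map_mul]

theorem poly_C (a : ℂ) : H.poly (C a) = a • H.poly 1 := by
  rw [← map_smul, smul_eq_C_mul, mul_one]

theorem mul_mem_jointInvSub (P : MvPolynomial (Fin d) ℂ) {𝓕 : Set X} {F : X}
    (hF : F ∈ 𝓕) :
    H.mul P F ∈ H.jointInvSub 𝓕 :=
  subset_closure <| subset_span <| Set.mem_biUnion hF <| subset_closure ⟨P, rfl⟩

variable [IsTopologicalAddGroup X] [ContinuousSMul ℂ X]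

def jointInvSubmodule (𝓕 : Set X) : Submodule ℂ X :=
  (span ℂ (⋃ F ∈ 𝓕, H.invSub F)).topologicalClosure

theorem coe_jointInvSubmodule (𝓕 : Set X) :
    (H.jointInvSubmodule 𝓕 : Set X) = H.jointInvSub 𝓕 :=
  topologicalClosure_coe _

theorem isClosed_jointInvSubmodule (𝓕 : Set X) : IsClosed (H.jointInvSubmodule 𝓕 : Set X) :=
  isClosed_topologicalClosure _

local notation "𝓕[" H ", " w "]" =>
  Set.range fun j : Fin d => HoloFunSpace.poly H (MvPolynomial.X j - MvPolynomial.C (w j))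

theorem poly_sub_eval_smul_one_mem (w : Fin d → ℂ) (P : MvPolynomial (Fin d) ℂ) :
    H.poly P - eval w P • H.poly 1 ∈ H.jointInvSubmodule 𝓕[H, w] := by
  obtain ⟨c, hc⟩ := Ideal.mem_span_range_iff_exists_fun.1 (sub_C_eval_mem_span_X_sub_C w P)
  rw [← H.poly_C, ← map_sub, ← hc, map_sum]
  refine sum_mem fun j _ => ?_
  rw [H.poly_mul, ← SetLike.mem_coe, coe_jointInvSubmodule]
  exact H.mul_mem_jointInvSub _ ⟨j, rfl⟩

theorem jointInvSubmodule_sup_span_one_eq_top (w : Fin d → ℂ) :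
    H.jointInvSubmodule 𝓕[H, w] ⊔ span ℂ {H.poly 1} = ⊤ := by
  set N := H.jointInvSubmodule 𝓕[H, w] ⊔ span ℂ {H.poly 1}
  have hclosed : IsClosed (N : Set X) :=
    isClosed_sup_finiteDimensional _ _ (H.isClosed_jointInvSubmodule _)
  have hpoly : Set.range (fun P => H.poly P) ⊆ (N : Set X) := by
    rintro _ ⟨P, rfl⟩
    show H.poly P ∈ N
    rw [← sub_add_cancel (H.poly P) (eval w P • H.poly 1)]
    exact add_mem (mem_sup_left (H.poly_sub_eval_smul_one_mem w P))
      (mem_sup_right (smul_mem _ _ (mem_span_singleton_self _)))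
  have hdense := closure_minimal hpoly hclosed
  rw [H.dense_poly.closure_eq] at hdense
  exact eq_top_iff'.2 fun x => hdense (Set.mem_univ x)

end HoloFunSpace

open HoloFunSpace in
theorem eq_const_add_jointInvSub_general
    {d : ℕ} {Ω : Set (Fin d → ℂ)} {X : Type*}
    [AddCommGroup X] [Module ℂ X] [TopologicalSpace X]
    [IsTopologicalAddGroup X] [ContinuousSMul ℂ X]
    (H : HoloFunSpace d Ω X) (w : Fin d → ℂ) (F : X) :
    ∃ c : ℂ, ∃ G ∈ H.jointInvSub
        (Set.range fun j : Fin d => H.poly (MvPolynomial.X j - MvPolynomial.C (w j))),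
      F = c • H.poly 1 + G := by
  obtain ⟨G, hG, y, hy, rfl⟩ :=
    Submodule.mem_sup.1 (H.jointInvSubmodule_sup_span_one_eq_top w ▸ Submodule.mem_top (x := F))
  obtain ⟨c, rfl⟩ := Submodule.mem_span_singleton.1 hy
  exact ⟨c, G, H.coe_jointInvSubmodule _ ▸ hG, add_comm _ _⟩

open HoloFunSpace in
/-- For every `w ∈ ℂ^d`, `X = ℂ·1 + S[ℱ_w]`, where
`ℱ_w = {z_j - w_j : 1 ≤ j ≤ d}`: every element of `X` is the sum of a constant
function and an element of the joint invariant subspace `S[ℱ_w]`. -/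
theorem eq_const_add_jointInvSub
    {d : ℕ} {Ω : Set (Fin d → ℂ)} {X : Type*}
    [AddCommGroup X] [Module ℂ X] [TopologicalSpace X]
    [IsTopologicalAddGroup X] [ContinuousSMul ℂ X] [T2Space X]
    (hΩ : IsOpen Ω) (H : HoloFunSpace d Ω X) (w : Fin d → ℂ) (F : X) :
    ∃ c : ℂ, ∃ G ∈ H.jointInvSub
        (Set.range fun j : Fin d => H.poly (MvPolynomial.X j - MvPolynomial.C (w j))),
      F = c • H.poly 1 + G :=
  eq_const_add_jointInvSub_general H w F
end
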